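/- arXiv:2602.11907 — 3 statements merged into one kernel-verified Lean document; each statement's English description precedes it below -/
import Mathlib

section
/- In the setting of the previous theorem (C cocomplete, (A, ⊗, I) small monoidal acting via ◁, J A = A ◁ J_I well-behaved for all (−) ◁ D), suppose additionally that for all D, E ∈ C the canonical map ν_J(Lan_J C((−) ◁ D, E)) ≅ C((−) ◁ D, E) is an isomorphism of presheaves on A. Then there is an adjunction isomorphism C(C ◁_J D, E) ≅ C(C, D ⊸ E), natural in C and E, where D ⊸ E = Lan_J(C((−) ◁ D, E)). -/
/-!
A morphism `X ◁_J D ⟶ E` out of the pointwise left Kan extension `Lan_J ((−) ◁ D)` is a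
cocone over the comma category `J ↓ X`, that is, a natural transformation
`ν_J X ⟶ C((−) ◁ D, E)`. By hypothesis the target is `ν_J (D ⊸ E)`, and density of `J` makes
`ν_J` fully faithful, so these are exactly the morphisms `X ⟶ D ⊸ E`.
-/

open CategoryTheory Limits Opposite

universe v u w

namespace WellBehavedness

variable {𝒜 : Type v} [SmallCategory 𝒜] {C : Type u} [Category.{v} C]

/-- The nerve functor `ν_J = C(J−, −) : C ⥤ PSh(𝒜)` of a functor `J : 𝒜 ⥤ C`. -/
abbrev nerve (J : 𝒜 ⥤ C) : C ⥤ (𝒜ᵒᵖ ⥤ Type v) :=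
  yoneda ⋙ (Functor.whiskeringLeft _ _ _).obj J.op

/-- The unit, at `P`, of the former Mathlib adjunction `Presheaf.yonedaAdjunction L α`
(`L ⊣ restrictedYoneda J`), spelled out with its old formula. -/
def yonedaAdjunctionUnitApp {J : 𝒜 ⥤ C} (L : (𝒜ᵒᵖ ⥤ Type v) ⥤ C) (α : J ⟶ yoneda ⋙ L)
    (P : 𝒜ᵒᵖ ⥤ Type v) : P ⟶ (nerve J).obj (L.obj P) where
  app Z := ↾fun z => α.app Z.unop ≫ L.map (yonedaEquiv.symm z)
  naturality Z Z' f := by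
    ext z
    have h := α.naturality f.unop
    simp only [Functor.comp_map] at h
    dsimp
    rw [yonedaEquiv_symm_map, L.map_comp, reassoc_of% h]

/-- A functor `J : 𝒜 ⥤ C` is *dense* iff its nerve is fully faithful. -/
def IsDense (J : 𝒜 ⥤ C) : Prop :=
  (nerve J).Full ∧ (nerve J).Faithful

/-- A functor `J : 𝒜 ⥤ C` is *well-behaved for* `F : 𝒜 ⥤ C` if it is fully faithful,
dense, and its nerve preserves the left Kan extension `Lan_J F`, i.e. the canonical
comparison exhibits `Lan_J F ⋙ ν_J` as a left Kan extension of `F ⋙ ν_J` along `J`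
(so that `Lan_J(C(JA, F−))(C) ≅ C(JA, (Lan_J F)(C))` naturally in `A` and `C`). -/
def WellBehavedFor (J F : 𝒜 ⥤ C) [J.HasLeftKanExtension F] : Prop :=
  J.Full ∧ J.Faithful ∧ IsDense J ∧
    (J.leftKanExtension F ⋙ nerve J).IsLeftKanExtension
      (CategoryTheory.Functor.whiskerRight (J.leftKanExtensionUnit F) (nerve J))

open scoped MonoidalCategory

/-- A (left) action of a monoidal category `(𝒜, ⊗, I)` on a category `C`: a functor
`◁ : 𝒜 × C ⥤ C` (curried here) together with coherent natural isomorphisms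
`I ◁ X ≅ X` and `(a ⊗ b) ◁ X ≅ a ◁ (b ◁ X)`. -/
structure LeftAction (𝒜 : Type v) [SmallCategory 𝒜] [MonoidalCategory 𝒜]
    (C : Type u) [Category.{v} C] where
  act : 𝒜 ⥤ C ⥤ C
  unitIso : act.obj (𝟙_ 𝒜) ≅ 𝟭 C
  mulIso : ∀ a b : 𝒜, act.obj (a ⊗ b) ≅ act.obj b ⋙ act.obj a
  mulIso_natural : ∀ {a a' b b' : 𝒜} (f : a ⟶ a') (g : b ⟶ b'),
    act.map (f ⊗ₘ g) ≫ (mulIso a' b').hom =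
      (mulIso a b).hom ≫ CategoryTheory.Functor.whiskerRight (act.map g) (act.obj a) ≫
        CategoryTheory.Functor.whiskerLeft (act.obj b') (act.map f)
  pentagon : ∀ a b c : 𝒜,
    (mulIso (a ⊗ b) c).hom ≫ CategoryTheory.Functor.whiskerLeft (act.obj c) (mulIso a b).hom =
      act.map (α_ a b c).hom ≫ (mulIso a (b ⊗ c)).hom ≫
        CategoryTheory.Functor.whiskerRight (mulIso b c).hom (act.obj a)
  unit_left : ∀ b : 𝒜,
    (mulIso (𝟙_ 𝒜) b).hom ≫ CategoryTheory.Functor.whiskerLeft (act.obj b) unitIso.hom ≫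
      (Functor.rightUnitor (act.obj b)).hom = act.map (λ_ b).hom
  unit_right : ∀ b : 𝒜,
    (mulIso b (𝟙_ 𝒜)).hom ≫ CategoryTheory.Functor.whiskerRight unitIso.hom (act.obj b) ≫
      (Functor.leftUnitor (act.obj b)).hom = act.map (ρ_ b).hom

variable {𝒜 : Type v} [SmallCategory 𝒜] [MonoidalCategory 𝒜]
variable {C : Type u} [Category.{v} C]

/-- The functor `J : 𝒜 ⥤ C`, `J a = a ◁ J_I`. -/
def actJ (L : LeftAction 𝒜 C) (JI : C) : 𝒜 ⥤ C where
  obj a := (L.act.obj a).obj JI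
  map f := (L.act.map f).app JI
  map_id a := by simp
  map_comp f g := by simp

/-- The action on morphisms, in both variables. -/
def actMap (L : LeftAction 𝒜 C) {a a' : 𝒜} {X X' : C} (f : a ⟶ a') (g : X ⟶ X') :
    (L.act.obj a).obj X ⟶ (L.act.obj a').obj X' :=
  (L.act.map f).app X ≫ (L.act.obj a').map g

variable [HasColimits C]

/-- The `J`-extension of the action: `X ◁_J D = (Lan_J ((−) ◁ D))(X)`. -/
noncomputable def tensJ (L : LeftAction 𝒜 C) (JI : C) (X D : C) : C :=
  (((actJ L JI).lan).obj (L.act.flip.obj D)).obj X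

/-- Functoriality of `◁_J` in both variables. -/
noncomputable def tensJMap (L : LeftAction 𝒜 C) (JI : C) {X X' D D' : C}
    (f : X ⟶ X') (g : D ⟶ D') : tensJ L JI X D ⟶ tensJ L JI X' D' :=
  (((actJ L JI).lan).obj (L.act.flip.obj D)).map f ≫
    ((((actJ L JI).lan).map (L.act.flip.map g)).app X')

/-- The internal hom `D ⊸ E = Lan_J (C((−) ◁ D, E))`, where the left Kan extension of
the presheaf `C((−) ◁ D, E) : 𝒜ᵒᵖ ⥤ Type` is taken along the Yoneda embedding (i.e.
via the Yoneda extension `Lan_𝐲 J` of `J`). -/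
noncomputable def dwand (L : LeftAction 𝒜 C) (JI : C) (D E : C) : C :=
  (yoneda.leftKanExtension (actJ L JI)).obj ((L.act.flip.obj D).op ⋙ yoneda.obj E)

section

-- Shadows the ambient variables, which carry `[MonoidalCategory 𝒜]` and `[HasColimits C]`.
variable {𝒜 : Type v} [SmallCategory 𝒜] {C : Type u} [Category.{v} C]

lemma yonedaAdjunctionUnitApp_naturality {J : 𝒜 ⥤ C} (L : (𝒜ᵒᵖ ⥤ Type v) ⥤ C)
    (α : J ⟶ yoneda ⋙ L) {P Q : 𝒜ᵒᵖ ⥤ Type v} (f : P ⟶ Q) :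
    f ≫ yonedaAdjunctionUnitApp L α Q =
      yonedaAdjunctionUnitApp L α P ≫ (nerve J).map (L.map f) := by
  ext a z
  dsimp [yonedaAdjunctionUnitApp]
  rw [Category.assoc, ← Functor.map_comp, yonedaEquiv_symm_naturality_right]

noncomputable def IsDense.fullyFaithful {J : 𝒜 ⥤ C} (hJ : IsDense J) :
    (nerve J).FullyFaithful :=
  have := hJ.1
  have := hJ.2
  .ofFullyFaithful _

def costructuredArrowCoconeEquiv (J F : 𝒜 ⥤ C) (X E : C) :
    (CostructuredArrow.proj J X ⋙ F ⟶ (Functor.const _).obj E) ≃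
      ((nerve J).obj X ⟶ F.op ⋙ yoneda.obj E) where
  toFun τ :=
    { app a := ↾fun v => τ.app (CostructuredArrow.mk v)
      naturality a b h := by
        ext v
        exact ((τ.naturality (CostructuredArrow.homMk h.unop rfl :
          CostructuredArrow.mk (J.map h.unop ≫ v) ⟶ CostructuredArrow.mk v)).trans
            (Category.comp_id _)).symm }
  invFun σ :=
    { app g := σ.app (op g.left) g.hom
      naturality g g' h := by
        have := types_congr_hom (σ.naturality h.left.op) g'.hom
        dsimp at this ⊢
        exact this.symm.trans
          ((congrArg _ (CostructuredArrow.w h)).trans (Category.comp_id _).symm) }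
  left_inv τ := rfl
  right_inv σ := rfl

variable [HasColimits C]

noncomputable def lanObjHomEquiv (J F : 𝒜 ⥤ C) (X E : C) :
    ((J.lan.obj F).obj X ⟶ E) ≃ ((nerve J).obj X ⟶ F.op ⋙ yoneda.obj E) :=
  (Functor.isPointwiseLeftKanExtensionOfIsLeftKanExtension _ (J.lanUnit.app F) X).homEquiv.trans
    (costructuredArrowCoconeEquiv J F X E)

lemma lanObjHomEquiv_apply_app (J F : 𝒜 ⥤ C) (X E : C) (φ : (J.lan.obj F).obj X ⟶ E)
    (a : 𝒜ᵒᵖ) (v : ((nerve J).obj X).obj a) :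
    (lanObjHomEquiv J F X E φ).app a v =
      (J.lanUnit.app F).app a.unop ≫ (J.lan.obj F).map v ≫ φ :=
  Category.assoc _ _ _

lemma lanObjHomEquiv_naturality_left (J F : 𝒜 ⥤ C) {X X' E : C} (f : X' ⟶ X)
    (φ : (J.lan.obj F).obj X ⟶ E) :
    lanObjHomEquiv J F X' E ((J.lan.obj F).map f ≫ φ) =
      (nerve J).map f ≫ lanObjHomEquiv J F X E φ := by
  ext a v
  dsimp
  rw [lanObjHomEquiv_apply_app, lanObjHomEquiv_apply_app]
  simp

lemma lanObjHomEquiv_naturality_right (J F : 𝒜 ⥤ C) {X E E' : C} (g : E ⟶ E')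
    (φ : (J.lan.obj F).obj X ⟶ E) :
    lanObjHomEquiv J F X E' (φ ≫ g) =
      lanObjHomEquiv J F X E φ ≫ Functor.whiskerLeft F.op (yoneda.map g) := by
  ext a v
  dsimp
  rw [lanObjHomEquiv_apply_app, lanObjHomEquiv_apply_app]
  simp

variable {J : 𝒜 ⥤ C} (hJ : IsDense J) (L : (𝒜ᵒᵖ ⥤ Type v) ⥤ C)
  (α : J ⟶ yoneda ⋙ L) (F : 𝒜 ⥤ C)

noncomputable def IsDense.lanHomEquiv (X E : C)
    [IsIso (yonedaAdjunctionUnitApp L α (F.op ⋙ yoneda.obj E))] :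
    ((J.lan.obj F).obj X ⟶ E) ≃ (X ⟶ L.obj (F.op ⋙ yoneda.obj E)) :=
  (lanObjHomEquiv J F X E).trans
    ((asIso (yonedaAdjunctionUnitApp L α (F.op ⋙ yoneda.obj E))).homToEquiv.trans
      hJ.fullyFaithful.homEquiv.symm)

lemma IsDense.map_lanHomEquiv (X E : C)
    [IsIso (yonedaAdjunctionUnitApp L α (F.op ⋙ yoneda.obj E))]
    (φ : (J.lan.obj F).obj X ⟶ E) :
    (nerve J).map (hJ.lanHomEquiv L α F X E φ) =
      lanObjHomEquiv J F X E φ ≫ yonedaAdjunctionUnitApp L α _ :=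
  hJ.fullyFaithful.map_preimage _

lemma IsDense.lanHomEquiv_naturality_left {X X' E : C}
    [IsIso (yonedaAdjunctionUnitApp L α (F.op ⋙ yoneda.obj E))]
    (f : X' ⟶ X) (φ : (J.lan.obj F).obj X ⟶ E) :
    hJ.lanHomEquiv L α F X' E ((J.lan.obj F).map f ≫ φ) =
      f ≫ hJ.lanHomEquiv L α F X E φ :=
  hJ.fullyFaithful.map_injective (by
    simp only [IsDense.map_lanHomEquiv, Functor.map_comp, lanObjHomEquiv_naturality_left,
      Category.assoc])

lemma IsDense.lanHomEquiv_naturality_right {X E E' : C}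
    [IsIso (yonedaAdjunctionUnitApp L α (F.op ⋙ yoneda.obj E))]
    [IsIso (yonedaAdjunctionUnitApp L α (F.op ⋙ yoneda.obj E'))]
    (g : E ⟶ E') (φ : (J.lan.obj F).obj X ⟶ E) :
    hJ.lanHomEquiv L α F X E' (φ ≫ g) =
      hJ.lanHomEquiv L α F X E φ ≫ L.map (Functor.whiskerLeft F.op (yoneda.map g)) :=
  hJ.fullyFaithful.map_injective (by
    simp only [IsDense.map_lanHomEquiv, Functor.map_comp, lanObjHomEquiv_naturality_right,
      Category.assoc]
    rw [yonedaAdjunctionUnitApp_naturality])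

end

lemma tensJMap_id_right (L : LeftAction 𝒜 C) (JI : C) {X X' : C} (D : C) (f : X ⟶ X') :
    tensJMap L JI f (𝟙 D) = ((actJ L JI).lan.obj (L.act.flip.obj D)).map f := by
  rw [tensJMap, CategoryTheory.Functor.map_id, CategoryTheory.Functor.map_id]
  exact Category.comp_id _

/-- **Theorem (Closedness of `◁_J`).**
In the setting of the monoidality theorem, suppose that for all `D, E ∈ C` the
canonical map `C((−) ◁ D, E) ⟶ ν_J (Lan_J (C((−) ◁ D, E)))` is an isomorphism of
presheaves on `𝒜`.  Then there is an adjunction isomorphism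
`C(X ◁_J D, E) ≅ C(X, D ⊸ E)`, natural in `X` and `E`,
where `D ⊸ E = Lan_J (C((−) ◁ D, E))`. -/
theorem tensJ_closed (L : LeftAction 𝒜 C) (JI : C)
    (hwb : ∀ D : C, WellBehavedFor (actJ L JI) (L.act.flip.obj D))
    (hnerve : ∀ D E : C,
      IsIso (yonedaAdjunctionUnitApp (yoneda.leftKanExtension (actJ L JI))
          (yoneda.leftKanExtensionUnit (actJ L JI))
        ((L.act.flip.obj D).op ⋙ yoneda.obj E))) :
    ∀ D : C, ∃ e : ∀ (X E : C), (tensJ L JI X D ⟶ E) ≃ (X ⟶ dwand L JI D E),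
      (∀ {X X' E : C} (f : X' ⟶ X) (φ : tensJ L JI X D ⟶ E),
        e X' E (tensJMap L JI f (𝟙 D) ≫ φ) = f ≫ e X E φ) ∧
      (∀ {X E E' : C} (g : E ⟶ E') (φ : tensJ L JI X D ⟶ E),
        e X E' (φ ≫ g) = e X E φ ≫
          (yoneda.leftKanExtension (actJ L JI)).map
            (CategoryTheory.Functor.whiskerLeft (L.act.flip.obj D).op (yoneda.map g))) := by
  intro D
  have hdense : IsDense (actJ L JI) := (hwb D).2.2.1
  have := hnerve D
  refine ⟨fun X E => hdense.lanHomEquiv _ (yoneda.leftKanExtensionUnit _) _ X E,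
    fun f φ => ?_, fun g φ => ?_⟩
  · rw [tensJMap_id_right]
    exact hdense.lanHomEquiv_naturality_left _ _ _ f φ
  · exact hdense.lanHomEquiv_naturality_right _ _ _ g φ

end WellBehavedness
end

section
/- Let Ctx ↪ 𝔽 be a subcategory that contains all objects and all isomorphisms of 𝔽 and is closed under +. Then Ctx is contextual if and only if Ctx is closed under binary products × and is prime: for all morphisms f, g of 𝔽, if f + g ∈ Ctx then f ∈ Ctx and g ∈ Ctx. -/
open CategoryTheory Limits

namespace Substitution

/-! ### The skeletal category `𝔽` of finite sets

Objects are natural numbers `n` (standing for the finite set `Fin n`), morphisms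
`m ⟶ n` are arbitrary functions `Fin m → Fin n`.  The coproduct `+` and the
product `×` are realised by addition and multiplication via the canonical
equivalences `Fin m ⊕ Fin n ≃ Fin (m + n)` and `Fin m × Fin n ≃ Fin (m * n)`. -/

/-- The coproduct `f + g` of two morphisms of `𝔽`. -/
def sumMap {m n m' n' : ℕ} (f : Fin m → Fin m') (g : Fin n → Fin n') :
    Fin (m + n) → Fin (m' + n') := fun i =>
  finSumFinEquiv (Sum.map f g (finSumFinEquiv.symm i))

/-- The product `f × g` of two morphisms of `𝔽`. -/
def prodMap {m n m' n' : ℕ} (f : Fin m → Fin m') (g : Fin n → Fin n') :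
    Fin (m * n) → Fin (m' * n') := fun i =>
  finProdFinEquiv (Prod.map f g (finProdFinEquiv.symm i))

/-- A subcategory of the category `𝔽` of finite sets containing all objects:
it is given by a class of morphisms containing all identities and closed under
composition. -/
structure ContextSub where
  mem : ∀ {m n : ℕ}, (Fin m → Fin n) → Prop
  id_mem : ∀ n : ℕ, mem (id : Fin n → Fin n)
  comp_mem : ∀ {m n k : ℕ} (f : Fin m → Fin n) (g : Fin n → Fin k),
    mem f → mem g → mem (g ∘ f)

/-- The subcategory is closed under the monoidal structure `+` of `𝔽`. -/
def SumClosed (W : ContextSub) : Prop :=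
  ∀ {m n m' n' : ℕ} (f : Fin m → Fin m') (g : Fin n → Fin n'),
    W.mem f → W.mem g → W.mem (sumMap f g)

/-- `(q, r)` exhibits `p` as a pullback of `b : z ⟶ y` along `f : x ⟶ y` in `𝔽`;
here `r : p ⟶ z` is the base change `r_f` of `f`. -/
def IsPullbackSq {p x y z : ℕ} (q : Fin p → Fin x) (r : Fin p → Fin z)
    (f : Fin x → Fin y) (b : Fin z → Fin y) : Prop :=
  (∀ w, f (q w) = b (r w)) ∧
    ∀ (v : Fin x) (u : Fin z), f v = b u → ∃! w, q w = v ∧ r w = u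

/-- The subcategory is pullback-stable: for every pullback in `𝔽` of a map
`b : B → Y` along `f : X → Y` with `f ∈ Ctx`, the projection `r_f : f*B → B`
lies in `Ctx`. -/
def PullbackStable (W : ContextSub) : Prop :=
  ∀ {p x y z : ℕ} (q : Fin p → Fin x) (r : Fin p → Fin z)
    (f : Fin x → Fin y) (b : Fin z → Fin y),
    IsPullbackSq q r f b → W.mem f → W.mem r

/-- A subcategory `Ctx ↪ 𝔽` is *contextual* if it contains all objects (automatic
here, since it is wide by definition), is closed under `+`, and is pullback-stable. -/
structure IsContextual (W : ContextSub) : Prop where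
  sumClosed : SumClosed W
  pullbackStable : PullbackStable W

/-- The subcategory contains all isomorphisms of `𝔽`. -/
def ContainsIsos (W : ContextSub) : Prop :=
  ∀ {m n : ℕ} (f : Fin m → Fin n), Function.Bijective f → W.mem f

/-- The subcategory is closed under the monoidal structure `×` of `𝔽`. -/
def ProdClosed (W : ContextSub) : Prop :=
  ∀ {m n m' n' : ℕ} (f : Fin m → Fin m') (g : Fin n → Fin n'),
    W.mem f → W.mem g → W.mem (prodMap f g)

/-- The subcategory is *prime*: if `f + g ∈ Ctx` then `f, g ∈ Ctx`. -/
def IsPrime (W : ContextSub) : Prop :=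
  ∀ {m n m' n' : ℕ} (f : Fin m → Fin m') (g : Fin n → Fin n'),
    W.mem (sumMap f g) → W.mem f ∧ W.mem g


/-! ### Auxiliary machinery -/

def pt (k : ℕ) : Fin k → Fin 1 := fun _ => 0

def cnt {x y : ℕ} (f : Fin x → Fin y) (c : Fin y) : ℕ := Fintype.card {a // f a = c}

def blocks : {y : ℕ} → (k : Fin y → ℕ) → Fin (∑ c, k c) → Fin y
  | 0, _ => fun i => Fin.elim0 (Fin.cast (by simp) i)
  | y + 1, k => fun i =>
      sumMap (blocks (k ∘ Fin.castSucc)) (pt (k (Fin.last y)))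
        (Fin.cast (by rw [Fin.sum_univ_castSucc]; rfl) i)

lemma cnt_comp_equiv {a b c : ℕ} (f : Fin b → Fin c) (e : Fin a ≃ Fin b) (c0 : Fin c) :
    cnt (f ∘ e) c0 = cnt f c0 :=
  Fintype.card_congr (e.subtypeEquiv (fun _ => Iff.rfl))

lemma cnt_pt (k : ℕ) (j : Fin 1) : cnt (pt k) j = k := by
  have : Fintype.card {a : Fin k // pt k a = j} = Fintype.card (Fin k) :=
    Fintype.card_congr (Equiv.subtypeUnivEquiv fun a => Subsingleton.elim _ _)
  rw [cnt, this, Fintype.card_fin]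

lemma cnt_sumMap_l {m n m' n' : ℕ} (f : Fin m → Fin m') (g : Fin n → Fin n') (c : Fin m') :
    cnt (sumMap f g) (finSumFinEquiv (Sum.inl c)) = cnt f c := by
  have e1 : {i : Fin (m + n) // sumMap f g i = finSumFinEquiv (Sum.inl c)} ≃
      {s : Fin m ⊕ Fin n // Sum.map f g s = Sum.inl c} :=
    finSumFinEquiv.symm.subtypeEquiv fun i => Equiv.apply_eq_iff_eq _
  have e2 : {s : Fin m ⊕ Fin n // Sum.map f g s = Sum.inl c} ≃
      {a : Fin m // Sum.map f g (Sum.inl a) = Sum.inl c} ⊕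
      {b : Fin n // Sum.map f g (Sum.inr b) = Sum.inl c} := Equiv.subtypeSum
  have e3 : {a : Fin m // Sum.map f g (Sum.inl a) = Sum.inl c} ≃ {a : Fin m // f a = c} :=
    Equiv.subtypeEquiv (Equiv.refl _) fun a => by simp
  haveI e4 : IsEmpty {b : Fin n // Sum.map f g (Sum.inr b) = Sum.inl c} :=
    ⟨fun ⟨b, hb⟩ => by simp at hb⟩
  exact Fintype.card_congr
    (e1.trans (e2.trans ((e3.sumCongr (Equiv.refl _)).trans (Equiv.sumEmpty _ _))))

lemma cnt_sumMap_r {m n m' n' : ℕ} (f : Fin m → Fin m') (g : Fin n → Fin n') (c : Fin n') :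
    cnt (sumMap f g) (finSumFinEquiv (Sum.inr c)) = cnt g c := by
  have e1 : {i : Fin (m + n) // sumMap f g i = finSumFinEquiv (Sum.inr c)} ≃
      {s : Fin m ⊕ Fin n // Sum.map f g s = Sum.inr c} :=
    finSumFinEquiv.symm.subtypeEquiv fun i => Equiv.apply_eq_iff_eq _
  have e2 : {s : Fin m ⊕ Fin n // Sum.map f g s = Sum.inr c} ≃
      {a : Fin m // Sum.map f g (Sum.inl a) = Sum.inr c} ⊕
      {b : Fin n // Sum.map f g (Sum.inr b) = Sum.inr c} := Equiv.subtypeSum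
  have e3 : {b : Fin n // Sum.map f g (Sum.inr b) = Sum.inr c} ≃ {b : Fin n // g b = c} :=
    Equiv.subtypeEquiv (Equiv.refl _) fun a => by simp
  haveI e4 : IsEmpty {a : Fin m // Sum.map f g (Sum.inl a) = Sum.inr c} :=
    ⟨fun ⟨b, hb⟩ => by simp at hb⟩
  exact Fintype.card_congr
    (e1.trans (e2.trans (((Equiv.refl _).sumCongr e3).trans (Equiv.emptySum _ _))))

lemma finSumFinEquiv_inl_eq_castSucc {y : ℕ} (c : Fin y) :
    (finSumFinEquiv (Sum.inl c) : Fin (y + 1)) = Fin.castSucc c := by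
  simp [finSumFinEquiv]; rfl

lemma finSumFinEquiv_inr_eq_last {y : ℕ} :
    (finSumFinEquiv (Sum.inr (0 : Fin 1)) : Fin (y + 1)) = Fin.last y := by
  simp [finSumFinEquiv]; rfl

lemma blocks_eq {y : ℕ} (k : Fin (y + 1) → ℕ) :
    blocks k = sumMap (blocks (k ∘ Fin.castSucc)) (pt (k (Fin.last y))) ∘
      (finCongr (by rw [Fin.sum_univ_castSucc]; rfl)) := rfl

lemma cnt_blocks : ∀ {y : ℕ} (k : Fin y → ℕ) (c : Fin y), cnt (blocks k) c = k c
  | 0, _, c => c.elim0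
  | y + 1, k, c => by
    rw [blocks_eq, cnt_comp_equiv]
    induction c using Fin.lastCases with
    | last => rw [← finSumFinEquiv_inr_eq_last, cnt_sumMap_r, cnt_pt]
    | cast c =>
      rw [← finSumFinEquiv_inl_eq_castSucc, cnt_sumMap_l, cnt_blocks]
      rfl

section Mem

variable {W : ContextSub}

lemma mem_comp_equiv_iff (hiso : ContainsIsos W) {a b c : ℕ}
    (f : Fin b → Fin c) (e : Fin a ≃ Fin b) : W.mem (f ∘ e) ↔ W.mem f := by
  constructor
  · intro h
    have : f = (f ∘ e) ∘ e.symm := by funext i; simp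
    rw [this]
    exact W.comp_mem _ _ (hiso _ e.symm.bijective) h
  · intro h
    exact W.comp_mem _ _ (hiso _ e.bijective) h

lemma mem_equiv_comp_iff (hiso : ContainsIsos W) {a b c : ℕ}
    (f : Fin a → Fin b) (e : Fin b ≃ Fin c) : W.mem (e ∘ f) ↔ W.mem f := by
  constructor
  · intro h
    have : f = e.symm ∘ (e ∘ f) := by funext i; simp
    rw [this]
    exact W.comp_mem _ _ h (hiso _ e.symm.bijective)
  · intro h
    exact W.comp_mem _ _ h (hiso _ e.bijective)

lemma mem_blocks_of_pt (hiso : ContainsIsos W) (hsum : SumClosed W) :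
    ∀ {y : ℕ} (k : Fin y → ℕ), (∀ c, W.mem (pt (k c))) → W.mem (blocks k)
  | 0, k, _ => hiso _ ⟨fun i _ _ => (Fin.cast (by simp) i : Fin 0).elim0,
      fun i => i.elim0⟩
  | y + 1, k, h => by
    rw [blocks_eq]
    rw [mem_comp_equiv_iff hiso]
    exact hsum _ _ (mem_blocks_of_pt hiso hsum _ fun c => h c.castSucc) (h (Fin.last y))

lemma pt_of_mem_blocks (hp : IsPrime W) (hiso : ContainsIsos W) :
    ∀ {y : ℕ} (k : Fin y → ℕ), W.mem (blocks k) → ∀ c, W.mem (pt (k c))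
  | 0, _, _, c => c.elim0
  | y + 1, k, h, c => by
    rw [blocks_eq, mem_comp_equiv_iff hiso] at h
    obtain ⟨h1, h2⟩ := hp _ _ h
    induction c using Fin.lastCases with
    | last => exact h2
    | cast c => exact pt_of_mem_blocks hp hiso _ h1 c

lemma exists_comp_eq {x x' y : ℕ} (f : Fin x → Fin y) (g : Fin x' → Fin y)
    (h : ∀ c, cnt f c = cnt g c) : ∃ e : Fin x ≃ Fin x', g ∘ e = f := by
  refine ⟨(Equiv.sigmaFiberEquiv f).symm.trans
    ((Equiv.sigmaCongrRight fun c => Fintype.equivOfCardEq (h c)).trans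
      (Equiv.sigmaFiberEquiv g)), ?_⟩
  funext a
  exact ((Fintype.equivOfCardEq (h (f a))) ⟨a, rfl⟩).2

lemma mem_iff_mem_of_cnt_eq (hiso : ContainsIsos W) {x x' y : ℕ}
    (f : Fin x → Fin y) (g : Fin x' → Fin y) (h : ∀ c, cnt f c = cnt g c) :
    W.mem f ↔ W.mem g := by
  obtain ⟨e, he⟩ := exists_comp_eq f g h
  rw [← he, mem_comp_equiv_iff hiso]

lemma mem_iff_blocks (hiso : ContainsIsos W) {x y : ℕ} (f : Fin x → Fin y) :
    W.mem f ↔ W.mem (blocks (cnt f)) :=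
  mem_iff_mem_of_cnt_eq hiso f _ (fun c => (cnt_blocks (cnt f) c).symm)

lemma mem_of_pt_cnt (hiso : ContainsIsos W) (hsum : SumClosed W) {x y : ℕ}
    (f : Fin x → Fin y) (h : ∀ c, W.mem (pt (cnt f c))) : W.mem f :=
  (mem_iff_blocks hiso f).2 (mem_blocks_of_pt hiso hsum _ h)

lemma pt_cnt_of_mem (hp : IsPrime W) (hiso : ContainsIsos W) {x y : ℕ}
    (f : Fin x → Fin y) (h : W.mem f) : ∀ c, W.mem (pt (cnt f c)) :=
  pt_of_mem_blocks hp hiso _ ((mem_iff_blocks hiso f).1 h)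

/-- Fibre counts in a pullback square. -/
lemma cnt_pullback {p x y z : ℕ} {q : Fin p → Fin x} {r : Fin p → Fin z}
    {f : Fin x → Fin y} {b : Fin z → Fin y} (hpb : IsPullbackSq q r f b) (u : Fin z) :
    cnt r u = cnt f (b u) := by
  have key : ∀ v : Fin x, f v = b u → ∃! w, q w = v ∧ r w = u := fun v hv => hpb.2 v u hv
  refine Fintype.card_congr
    { toFun := fun w => ⟨q w.1, by rw [hpb.1, w.2]⟩
      invFun := fun v => ⟨(key v.1 v.2).choose, (key v.1 v.2).choose_spec.1.2⟩
      left_inv := ?_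
      right_inv := ?_ }
  · rintro ⟨w, hw⟩
    exact Subtype.ext
      (((key (q w) (by rw [hpb.1, hw])).choose_spec.2 w ⟨rfl, hw⟩).symm)
  · rintro ⟨v, hv⟩
    exact Subtype.ext ((key v hv).choose_spec.1.1)

end Mem

/-- **Proposition (Characterisation of contextuality).**
Let `Ctx ↪ 𝔽` be a subcategory that contains all objects and all isomorphisms of `𝔽`
and is closed under `+`.  Then `Ctx` is contextual if and only if `Ctx` is closed
under `×` and is prime. -/
theorem contextual_iff_prodClosed_and_isPrime (W : ContextSub)
    (hiso : ContainsIsos W) (hsum : SumClosed W) :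
    IsContextual W ↔ (ProdClosed W ∧ IsPrime W) := by
  constructor
  · rintro ⟨_, hpb⟩
    constructor
    · -- closed under products, via pullback stability
      intro m n m' n' f g hf hg
      have hfid : W.mem (prodMap f (id : Fin n → Fin n)) := by
        refine hpb (fun i => (finProdFinEquiv.symm i).1) (prodMap f id) f
          (fun i => (finProdFinEquiv.symm i).1) ⟨fun w => by simp [prodMap], ?_⟩ hf
        intro v u h
        change f v = (finProdFinEquiv.symm u).1 at h
        refine ⟨finProdFinEquiv (v, (finProdFinEquiv.symm u).2), ⟨by simp, ?_⟩, ?_⟩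
        · simp only [prodMap, Equiv.symm_apply_apply, Prod.map_apply, id_eq]
          rw [h, Prod.mk.eta, Equiv.apply_symm_apply]
        · rintro w' ⟨h1, h2⟩
          change (finProdFinEquiv.symm w').1 = v at h1
          have h3 : Prod.map f id (finProdFinEquiv.symm w') = finProdFinEquiv.symm u := by
            have := congrArg finProdFinEquiv.symm h2
            simpa [prodMap] using this
          refine finProdFinEquiv.symm.injective ?_
          rw [Equiv.symm_apply_apply]
          exact Prod.ext h1 (by simpa using congrArg Prod.snd h3)
      have hgid : W.mem (prodMap (id : Fin m' → Fin m') g) := by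
        refine hpb (fun i => (finProdFinEquiv.symm i).2) (prodMap id g) g
          (fun i => (finProdFinEquiv.symm i).2) ⟨fun w => by simp [prodMap], ?_⟩ hg
        intro v u h
        change g v = (finProdFinEquiv.symm u).2 at h
        refine ⟨finProdFinEquiv ((finProdFinEquiv.symm u).1, v), ⟨by simp, ?_⟩, ?_⟩
        · simp only [prodMap, Equiv.symm_apply_apply, Prod.map_apply, id_eq]
          rw [h, Prod.mk.eta, Equiv.apply_symm_apply]
        · rintro w' ⟨h1, h2⟩
          change (finProdFinEquiv.symm w').2 = v at h1
          have h3 : Prod.map id g (finProdFinEquiv.symm w') = finProdFinEquiv.symm u := by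
            have := congrArg finProdFinEquiv.symm h2
            simpa [prodMap] using this
          refine finProdFinEquiv.symm.injective ?_
          rw [Equiv.symm_apply_apply]
          exact Prod.ext (by simpa using congrArg Prod.fst h3) h1
      have hcomp : prodMap f g =
          prodMap (id : Fin m' → Fin m') g ∘ prodMap f (id : Fin n → Fin n) := by
        funext i
        simp [prodMap]
      rw [hcomp]
      exact W.comp_mem _ _ hfid hgid
    · -- prime, via pullback stability
      intro m n m' n' f g hfg
      constructor
      · refine hpb (fun a => finSumFinEquiv (Sum.inl a)) f (sumMap f g)
          (fun c => finSumFinEquiv (Sum.inl c)) ⟨fun w => by simp [sumMap], ?_⟩ hfg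
        intro v u h
        rcases hs : finSumFinEquiv.symm v with a | bb
        · have hv : v = finSumFinEquiv (Sum.inl a) := by rw [← hs, Equiv.apply_symm_apply]
          have hfa : f a = u := by
            have h4 : sumMap f g v = finSumFinEquiv (Sum.inl (f a)) := by
              simp only [sumMap, hs, Sum.map_inl]
            rw [h4] at h
            simpa using finSumFinEquiv.injective h
          refine ⟨a, ⟨hv.symm, hfa⟩, ?_⟩
          rintro w' ⟨h1, h2⟩
          exact Sum.inl.inj (finSumFinEquiv.injective (h1.trans hv))
        · exfalso
          have h4 : sumMap f g v = finSumFinEquiv (Sum.inr (g bb)) := by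
            simp only [sumMap, hs, Sum.map_inr]
          rw [h4] at h
          exact absurd (finSumFinEquiv.injective h) (by simp)
      · refine hpb (fun a => finSumFinEquiv (Sum.inr a)) g (sumMap f g)
          (fun c => finSumFinEquiv (Sum.inr c)) ⟨fun w => by simp [sumMap], ?_⟩ hfg
        intro v u h
        rcases hs : finSumFinEquiv.symm v with aa | b0
        · exfalso
          have h4 : sumMap f g v = finSumFinEquiv (Sum.inl (f aa)) := by
            simp only [sumMap, hs, Sum.map_inl]
          rw [h4] at h
          exact absurd (finSumFinEquiv.injective h) (by simp)
        · have hv : v = finSumFinEquiv (Sum.inr b0) := by rw [← hs, Equiv.apply_symm_apply]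
          have hgb : g b0 = u := by
            have h4 : sumMap f g v = finSumFinEquiv (Sum.inr (g b0)) := by
              simp only [sumMap, hs, Sum.map_inr]
            rw [h4] at h
            simpa using finSumFinEquiv.injective h
          refine ⟨b0, ⟨hv.symm, hgb⟩, ?_⟩
          rintro w' ⟨h1, h2⟩
          exact Sum.inr.inj (finSumFinEquiv.injective (h1.trans hv))
  · rintro ⟨hprod, hp⟩
    refine ⟨hsum, ?_⟩
    intro p x y z q r f b hpb hf
    refine mem_of_pt_cnt hiso hsum r fun u => ?_
    rw [cnt_pullback hpb u]
    exact pt_cnt_of_mem hp hiso f hf (b u)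

end Substitution
end

section
/- Let i : 𝕊 → Set be the inclusion of the category of finite sets and surjections into the category of sets. The essential image of the left Kan extension functor Lan_i : PSh 𝕊 → [Set, Set] consists exactly of the finitary, preimage-preserving endofunctors of Set, i.e. those endofunctors that preserve filtered colimits and preserve preimages (pullbacks in which one leg is a monomorphism). -/
/-!
`Lan_i H` is computed pointwise by the coend `∫ⁿ H(n) × Xⁿ`: pairs `(t, x)` with `t ∈ H(n)` and
`x : Fin n → X`, modulo `(t, y ∘ p) ~ (H p t, y)` for surjections `p`. Every class has a
representative with `x` injective, and two representatives are equal iff they reduce to a common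
one with injective `x`. Hence an element only involves finitely many points of `X`, which lift
through filtered colimits, and its set of points `range x` is well defined and commutes with
images, which gives preservation of preimages.

Conversely, for `G` finitary and preimage-preserving let `H(n) ⊆ G(Fin n)` consist of the elements
not coming from a proper subset of `Fin n`; preservation of preimages makes `H` stable under
surjections. Finitarity and a minimal choice of `n` present every element of `G X` as `G x t`
with `t ∈ H(n)`, and pulling back two injective presentations along each other shows that they
differ by a bijection, so `Lan_i H ≅ G`.
-/

open CategoryTheory Limits

namespace RelevantFunctors

/-- The category `𝕊` of finite sets and surjections, presented skeletally:
objects are natural numbers `n` (standing for `Fin n`), morphisms are surjective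
functions. -/
structure SObj where
  n : ℕ

instance : Category SObj where
  Hom m n := {f : Fin m.n → Fin n.n // Function.Surjective f}
  id m := ⟨id, Function.surjective_id⟩
  comp f g := ⟨g.1 ∘ f.1, g.2.comp f.2⟩
  id_comp f := Subtype.ext rfl
  comp_id f := Subtype.ext rfl
  assoc f g h := Subtype.ext rfl

/-- The inclusion `i : 𝕊 → Set` of the category of finite sets and surjections into
the category of sets. -/
def inclS : SObj ⥤ Type where
  obj m := Fin m.n
  map f := TypeCat.ofHom f.1
  map_id := fun _ => rfl
  map_comp := fun _ _ => rfl

/-- An endofunctor of `Set` *preserves preimages* if it sends every pullback square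
in which one of the two legs being pulled back is a monomorphism to a pullback
square. -/
def PreservesPreimages (G : Type ⥤ Type) : Prop :=
  ∀ {P X Y Z : Type} (fst : P ⟶ X) (snd : P ⟶ Y) (f : X ⟶ Z) (g : Y ⟶ Z),
    Mono g → IsPullback fst snd f g →
    IsPullback (G.map fst) (G.map snd) (G.map f) (G.map g)

lemma PreservesPreimages.of_iso {F G : Type ⥤ Type} (e : F ≅ G) (hF : PreservesPreimages F) :
    PreservesPreimages G := fun fst snd f g hg hpb =>
  (hF fst snd f g hg hpb).of_iso (e.app _) (e.app _) (e.app _) (e.app _)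
    (e.hom.naturality _) (e.hom.naturality _) (e.hom.naturality _) (e.hom.naturality _)

instance (A : Type) [Finite A] : IsFinitelyPresentable.{0} A :=
  haveI := Cardinal.fact_isRegular_aleph0
  (hasCardinalLT_of_finite A _ le_rfl).isCardinalPresentable

section FilteredColimit

variable {J : Type} [SmallCategory J] [IsFiltered J] {K : J ⥤ Type} {c : Cocone K}
  {A : Type} [Finite A]

lemma exists_lift_of_isColimit (hc : IsColimit c) (x : A → c.pt) :
    ∃ (j : J) (x' : A → K.obj j), c.ι.app j ∘ x' = x := by
  obtain ⟨j, x', hx'⟩ := IsFinitelyPresentable.exists_hom_of_isColimit hc (↾x)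
  exact ⟨j, x', funext (ConcreteCategory.congr_hom hx')⟩

lemma exists_map_comp_eq_of_isColimit (hc : IsColimit c) {j : J} (x y : A → K.obj j)
    (h : c.ι.app j ∘ x = c.ι.app j ∘ y) :
    ∃ (k : J) (f : j ⟶ k), K.map f ∘ x = K.map f ∘ y := by
  obtain ⟨k, f, hf⟩ := (Types.FilteredColimit.isColimit_eq_iff'
    (isColimitOfPreserves (coyoneda.obj (.op A)) hc) (↾x) (↾y)).mp
    (ConcreteCategory.hom_ext _ _ (congrFun h))
  exact ⟨k, f, funext (ConcreteCategory.congr_hom hf)⟩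

end FilteredColimit

lemma exists_surjective_injective_factorization {X : Type} {n : ℕ} (x : Fin n → X) :
    ∃ (k : ℕ) (p : Fin n → Fin k) (z : Fin k → X),
      Function.Surjective p ∧ Function.Injective z ∧ z ∘ p = x := by
  let e := Finite.equivFin (Set.range x)
  exact ⟨_, e ∘ Set.rangeFactorization x, Subtype.val ∘ e.symm,
    e.surjective.comp Set.rangeFactorization_surjective,
    Subtype.val_injective.comp e.symm.injective,
    funext fun i => by simp only [Function.comp_apply, Equiv.symm_apply_apply]; rfl⟩

lemma exists_surjective_comp_eq {X : Type} {k k' m : ℕ} {z : Fin k → X} {z' : Fin k' → X}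
    {q : Fin m → Fin k} {q' : Fin m → Fin k'} (hz : Function.Injective z)
    (hq : Function.Surjective q) (hq' : Function.Surjective q') (h : z ∘ q = z' ∘ q') :
    ∃ σ : Fin k' → Fin k, Function.Surjective σ ∧ z ∘ σ = z' ∧ σ ∘ q' = q := by
  have hσz : z ∘ (q ∘ Function.surjInv hq') = z' := by
    rw [← Function.comp_assoc, h, Function.comp_assoc,
      (Function.rightInverse_surjInv hq').comp_eq_id, Function.comp_id]
  have hσq : (q ∘ Function.surjInv hq') ∘ q' = q :=
    hz.comp_left (show z ∘ _ = z ∘ q by rw [← Function.comp_assoc, hσz, h])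
  exact ⟨_, fun i => by obtain ⟨j, rfl⟩ := hq i; exact ⟨q' j, congrFun hσq j⟩, hσz, hσq⟩

/-- `⟨n, x, t⟩` stands for the class of `(t, x) ∈ H(n) × Xⁿ` in the coend `∫ⁿ H(n) × Xⁿ`,
the value at `X` of the left Kan extension of `H` along `inclS`. -/
structure Term (H : SObj ⥤ Type) (X : Type) where
  n : ℕ
  x : Fin n → X
  t : H.obj ⟨n⟩

namespace Term

variable {H : SObj ⥤ Type} {X Y : Type}

def Rel (H : SObj ⥤ Type) (X : Type) (a b : Term H X) : Prop :=
  ∃ p : (⟨a.n⟩ : SObj) ⟶ ⟨b.n⟩, b.x ∘ p.1 = a.x ∧ H.map p a.t = b.t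

def map (f : X → Y) (a : Term H X) : Term H Y := ⟨a.n, f ∘ a.x, a.t⟩

abbrev arrow (a : Term H X) : CostructuredArrow inclS X :=
  CostructuredArrow.mk (Y := ⟨a.n⟩) (↾a.x)

lemma Rel.map (f : X → Y) {a b : Term H X} : Rel H X a b → Rel H Y (a.map f) (b.map f) :=
  fun ⟨p, hx, ht⟩ => ⟨p, congrArg (f ∘ ·) hx, ht⟩

lemma mk_eq_mk_of_cospan {a b : Term H X} {k : ℕ} (w : Fin k → X)
    (p : (⟨a.n⟩ : SObj) ⟶ ⟨k⟩) (q : (⟨b.n⟩ : SObj) ⟶ ⟨k⟩)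
    (hp : w ∘ p.1 = a.x) (hq : w ∘ q.1 = b.x) (ht : H.map p a.t = H.map q b.t) :
    Quot.mk (Rel H X) a = Quot.mk (Rel H X) b :=
  calc Quot.mk (Rel H X) a = Quot.mk _ ⟨k, w, H.map p a.t⟩ := Quot.sound ⟨p, hp, rfl⟩
    _ = Quot.mk _ ⟨k, w, H.map q b.t⟩ := by rw [ht]
    _ = Quot.mk _ b := (Quot.sound ⟨q, hq, rfl⟩).symm

lemma exists_mk_eq_of_injective (u : Quot (Rel H X)) :
    ∃ a : Term H X, Function.Injective a.x ∧ Quot.mk (Rel H X) a = u := by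
  induction u using Quot.ind with
  | mk a =>
    obtain ⟨k, p, z, hp, hz, hzp⟩ := exists_surjective_injective_factorization a.x
    exact ⟨⟨k, z, H.map ⟨p, hp⟩ a.t⟩, hz, (Quot.sound ⟨⟨p, hp⟩, hzp, rfl⟩).symm⟩

def Joinable (a b : Term H X) : Prop :=
  ∃ (k : ℕ) (z : Fin k → X) (p : (⟨a.n⟩ : SObj) ⟶ ⟨k⟩) (q : (⟨b.n⟩ : SObj) ⟶ ⟨k⟩),
    Function.Injective z ∧ z ∘ p.1 = a.x ∧ z ∘ q.1 = b.x ∧ H.map p a.t = H.map q b.t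

lemma joinable_of_rel {a b : Term H X} (h : Rel H X a b) : Joinable a b := by
  obtain ⟨p, hx, ht⟩ := h
  obtain ⟨k, q, z, hq, hz, hzq⟩ := exists_surjective_injective_factorization b.x
  refine ⟨k, z, p ≫ ⟨q, hq⟩, ⟨q, hq⟩, hz, ?_, hzq, ?_⟩
  · rw [← hx, ← hzq]; rfl
  · rw [Functor.map_comp, types_comp_apply, ht]

lemma Joinable.trans {a b c : Term H X} : Joinable a b → Joinable b c → Joinable a c := by
  rintro ⟨k, z, p, q, hz, hzp, hzq, ht⟩ ⟨k', z', p', q', -, hzp', hzq', ht'⟩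
  obtain ⟨σ, hσ, hzσ, hσp'⟩ := exists_surjective_comp_eq hz q.2 p'.2 (hzq.trans hzp'.symm)
  let σ' : (⟨k'⟩ : SObj) ⟶ ⟨k⟩ := ⟨σ, hσ⟩
  refine ⟨k, z, p, q' ≫ σ', hz, hzp, ?_, ?_⟩
  · rw [← hzq', ← hzσ]; rfl
  · have hq : q = p' ≫ σ' := Subtype.ext hσp'.symm
    rw [ht, hq, Functor.map_comp, Functor.map_comp, types_comp_apply, types_comp_apply, ht']

lemma joinable_of_eqvGen {a b : Term H X} (h : Relation.EqvGen (Rel H X) a b) : Joinable a b := by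
  induction h with
  | rel a b hab => exact joinable_of_rel hab
  | refl a => exact joinable_of_rel ⟨𝟙 _, rfl, H.map_id_apply _ a.t⟩
  | symm a b _ ih =>
    obtain ⟨k, z, p, q, hz, hzp, hzq, ht⟩ := ih
    exact ⟨k, z, q, p, hz, hzq, hzp, ht.symm⟩
  | trans a b c _ _ ih₁ ih₂ => exact ih₁.trans ih₂

lemma exists_cospan_of_mk_map_eq {φ : X → Y} {a b : Term H X}
    (h : Quot.mk (Rel H Y) (a.map φ) = Quot.mk (Rel H Y) (b.map φ)) :
    ∃ (k : ℕ) (w : Fin k → X) (p : (⟨a.n⟩ : SObj) ⟶ ⟨k⟩) (q : (⟨b.n⟩ : SObj) ⟶ ⟨k⟩),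
      φ ∘ w ∘ p.1 = φ ∘ a.x ∧ φ ∘ w ∘ q.1 = φ ∘ b.x ∧ H.map p a.t = H.map q b.t := by
  obtain ⟨k, z, p, q, -, hzp, hzq, ht⟩ := joinable_of_eqvGen (Quot.eqvGen_exact h)
  -- `z` lifts along `φ` because `p` has a section
  have hw : φ ∘ a.x ∘ Function.surjInv p.2 = z := funext fun i =>
    (congrFun hzp _).symm.trans (congrArg z (Function.surjInv_eq p.2 i))
  refine ⟨k, a.x ∘ Function.surjInv p.2, p, q, ?_, ?_, ht⟩
  · rw [← Function.comp_assoc, hw]; exact hzp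
  · rw [← Function.comp_assoc, hw]; exact hzq

end Term

def lanModel (H : SObj ⥤ Type) : Type ⥤ Type where
  obj X := Quot (Term.Rel H X)
  map f := ↾(Quot.map (Term.map f) fun _ _ => Term.Rel.map f)
  map_id X := by ext ⟨a⟩; rfl
  map_comp f g := by ext ⟨a⟩; rfl

namespace lanModel

variable {H : SObj ⥤ Type} {X Y : Type}

lemma map_mk (f : X ⟶ Y) (a : Term H X) :
    (lanModel H).map f (Quot.mk _ a) = Quot.mk _ (a.map f) := rfl

lemma map_injective {φ : X ⟶ Y} (hφ : Function.Injective φ) :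
    Function.Injective ((lanModel H).map φ) := by
  rintro ⟨a⟩ ⟨b⟩ h
  obtain ⟨k, w, p, q, hp, hq, ht⟩ := Term.exists_cospan_of_mk_map_eq h
  exact Term.mk_eq_mk_of_cospan w p q (hφ.comp_left hp) (hφ.comp_left hq) ht

def support : (lanModel H).obj X → Set X :=
  Quot.lift (fun a => Set.range a.x) fun _ _ ⟨p, hx, _⟩ => by rw [← hx, p.2.range_comp]

lemma support_map (f : X ⟶ Y) (u : (lanModel H).obj X) :
    support ((lanModel H).map f u) = f '' support u := by
  induction u using Quot.ind with
  | mk a => exact Set.range_comp f a.x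

lemma mem_range_map_of_support_subset {φ : X ⟶ Y} {u : (lanModel H).obj Y}
    (h : support u ⊆ Set.range φ) : u ∈ Set.range ((lanModel H).map φ) := by
  induction u using Quot.ind with
  | mk a =>
    obtain ⟨x, hx⟩ := Set.range_subset_range_iff_exists_comp.mp h
    exact ⟨Quot.mk _ ⟨a.n, x, a.t⟩, by rw [map_mk, Term.map, ← hx]⟩

end lanModel

theorem lanModel_preservesPreimages (H : SObj ⥤ Type) : PreservesPreimages (lanModel H) := by
  intro P X Y Z fst snd f g hg hpb
  have hfst : Function.Injective fst := (mono_iff_injective fst).mp (hpb.mono_fst_of_mono hg)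
  rw [mono_iff_injective] at hg
  rw [Types.isPullback_iff]
  refine ⟨by rw [← Functor.map_comp, hpb.w, Functor.map_comp],
    fun u v h => lanModel.map_injective hfst h.1, fun u v huv => ?_⟩
  have hu : lanModel.support u ⊆ Set.range fst := by
    rw [Types.range_fst_of_isPullback hpb, ← Set.image_subset_iff, ← lanModel.support_map, huv,
      lanModel.support_map]
    exact Set.image_subset_range _ _
  obtain ⟨w, rfl⟩ := lanModel.mem_range_map_of_support_subset hu
  refine ⟨w, rfl, lanModel.map_injective hg ?_⟩
  rw [← huv, ← Functor.map_comp_apply, ← hpb.w, Functor.map_comp_apply]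

theorem lanModel_preservesFilteredColimits (H : SObj ⥤ Type) :
    PreservesFilteredColimits (lanModel H) := by
  refine ⟨fun J _ _ => ⟨fun {K} => ⟨fun {c} hc => ⟨Types.FilteredColimit.isColimitOf' _ _ ?_ ?_⟩⟩⟩⟩
  · rintro ⟨a⟩
    obtain ⟨j, x, hx⟩ := exists_lift_of_isColimit hc a.x
    refine ⟨j, Quot.mk _ ⟨a.n, x, a.t⟩, ?_⟩
    rw [Functor.mapCocone_ι_app, lanModel.map_mk, Term.map, hx]
  · rintro j ⟨a⟩ ⟨b⟩ h
    obtain ⟨k, w, p, q, hp, hq, ht⟩ := Term.exists_cospan_of_mk_map_eq h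
    obtain ⟨l, f, hf⟩ := exists_map_comp_eq_of_isColimit hc (Sum.elim (w ∘ p.1) (w ∘ q.1))
      (Sum.elim a.x b.x) (by rw [Sum.comp_elim, Sum.comp_elim, hp, hq])
    rw [Sum.comp_elim, Sum.comp_elim, Sum.elim_eq_iff] at hf
    exact ⟨l, f, Term.mk_eq_mk_of_cospan (K.map f ∘ w) p q hf.1 hf.2 ht⟩

namespace lanModel

variable (H : SObj ⥤ Type)

def unit : H ⟶ inclS ⋙ lanModel H where
  app n := ↾fun t => Quot.mk _ ⟨n.n, id, t⟩
  naturality n m p := by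
    ext t
    exact (Quot.sound ⟨p, rfl, rfl⟩).symm

def isPointwiseLeftKanExtensionAt (X : Type) :
    (Functor.LeftExtension.mk (lanModel H) (unit H)).IsPointwiseLeftKanExtensionAt X where
  desc s := ↾(Quot.lift (fun a => s.ι.app a.arrow a.t) fun a b ⟨p, hx, ht⟩ => by
    rw [← ht]
    exact (ConcreteCategory.congr_hom
      (s.w (CostructuredArrow.homMk (f := a.arrow) (f' := b.arrow) p
        (ConcreteCategory.hom_ext _ _ (congrFun hx)))) a.t).symm)
  fac s j := by
    rw [CostructuredArrow.eq_mk j]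
    rfl
  uniq s m hm := by
    ext ⟨a⟩
    exact ConcreteCategory.congr_hom (hm a.arrow) a.t

instance isLeftKanExtension : (lanModel H).IsLeftKanExtension (unit H) :=
  Functor.LeftExtension.IsPointwiseLeftKanExtension.isLeftKanExtension
    (isPointwiseLeftKanExtensionAt H)

noncomputable def lanObjIso : (Functor.lan inclS).obj H ≅ lanModel H :=
  Functor.leftKanExtensionUnique _ ((Functor.lanUnit inclS).app H) _ (unit H)

end lanModel

section FullySupported

variable {G : Type ⥤ Type}

variable (G) in
def IsFullySupported {A : Type} (t : G.obj A) : Prop :=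
  ∀ S : Set A, t ∈ Set.range (G.map (↾(Subtype.val : S → A))) → S = Set.univ

lemma IsFullySupported.surjective_of_map_eq {A B : Type} {t : G.obj A}
    (ht : IsFullySupported G t) {f : B → A} {s : G.obj B} (hs : G.map (↾f) s = t) :
    Function.Surjective f := by
  refine Set.range_eq_univ.mp (ht _ ⟨G.map (↾(Set.rangeFactorization f)) s, ?_⟩)
  rw [← Functor.map_comp_apply]
  exact hs

lemma IsFullySupported.map_of_surjective (hpre : PreservesPreimages G) {A B : Type}
    {t : G.obj A} (ht : IsFullySupported G t) {f : A → B} (hf : Function.Surjective f) :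
    IsFullySupported G (G.map (↾f) t) := by
  rintro S ⟨s, hs⟩
  have hpb : IsPullback (↾(Subtype.val : f ⁻¹' S → A)) (↾(S.restrictPreimage f)) (↾f)
      (↾(Subtype.val : S → B)) :=
    (Types.isPullback_iff _ _ _ _).mpr ⟨rfl, fun _ _ h => Subtype.ext h.1,
      fun a b h => ⟨⟨a, show f a ∈ S from (show f a = b from h) ▸ b.2⟩, rfl, Subtype.ext h⟩⟩
  obtain ⟨w, hw, -⟩ := Types.exists_of_isPullback
    (hpre _ _ _ _ ((mono_iff_injective _).mpr Subtype.val_injective) hpb) t s hs.symm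
  have hS : f ⁻¹' S = Set.univ := ht _ ⟨w, hw⟩
  rwa [Set.preimage_eq_univ_iff, hf.range_eq, Set.univ_subset_iff] at hS

lemma exists_map_eq_of_finite {X S : Type} [Finite S] (x : S → X) (s : G.obj S) :
    ∃ (x' : Fin (Nat.card S) → X) (t : G.obj (Fin (Nat.card S))),
      G.map (↾x') t = G.map (↾x) s := by
  let e := Finite.equivFin S
  refine ⟨x ∘ e.symm, G.map (↾e) s, ?_⟩
  rw [← Functor.map_comp_apply]
  congr
  ext
  simp

lemma exists_map_eq_of_preservesFilteredColimits (hfil : PreservesFilteredColimits G) {X : Type}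
    (u : G.obj X) : ∃ (k : ℕ) (x : Fin k → X) (t : G.obj (Fin k)), G.map (↾x) t = u := by
  have := Cardinal.fact_isRegular_aleph0
  obtain ⟨S, s, rfl⟩ := Types.jointly_surjective_of_isColimit
    (isColimitOfPreserves G (HasCardinalLT.Set.isColimitCocone X _ le_rfl)) u
  have : Finite S.1 := (hasCardinalLT_aleph0_iff _).mp S.2
  exact ⟨_, exists_map_eq_of_finite (S := S.1) Subtype.val s⟩

lemma exists_isFullySupported_map_eq (hfil : PreservesFilteredColimits G) {X : Type}
    (u : G.obj X) : ∃ (k : ℕ) (x : Fin k → X) (t : G.obj (Fin k)),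
      IsFullySupported G t ∧ G.map (↾x) t = u := by
  classical
  have hk := exists_map_eq_of_preservesFilteredColimits hfil u
  obtain ⟨x, t, hxt⟩ := Nat.find_spec hk
  refine ⟨_, x, t, fun S ⟨s, hs⟩ => Set.eq_univ_of_forall fun i => ?_, hxt⟩
  -- otherwise `u` would come from `Fin (Nat.card S)`, contradicting the minimality of `k`
  by_contra hi
  obtain ⟨x', t', ht'⟩ := exists_map_eq_of_finite (x ∘ Subtype.val) s
  refine Nat.find_min hk (Finite.card_subtype_lt hi |>.trans_eq (Nat.card_fin _)) ⟨x', t', ?_⟩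
  rw [ht']
  rwa [← hs, ← Functor.map_comp_apply] at hxt

variable (G) in
def fullySupported (hpre : PreservesPreimages G) : Subfunctor (inclS ⋙ G) where
  obj _ := {t | IsFullySupported G t}
  map p _ ht := ht.map_of_surjective hpre p.2

end FullySupported

section Evaluation

variable {G : Type ⥤ Type} (hpre : PreservesPreimages G)

def fullySupportedEval : lanModel (fullySupported G hpre).toFunctor ⟶ G where
  app X := ↾(Quot.lift (fun a => G.map (↾a.x) a.t.1) fun a b ⟨p, hx, ht⟩ => by
    rw [← hx, ← ht]
    exact G.map_comp_apply (↾p.1) (↾b.x) a.t.1)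
  naturality X Y f := by
    ext ⟨a⟩
    exact G.map_comp_apply (↾a.x) f a.t.1

lemma fullySupportedEval_app_injective (X : Type) :
    Function.Injective ((fullySupportedEval hpre).app X) := by
  intro u v h
  obtain ⟨a, -, rfl⟩ := Term.exists_mk_eq_of_injective u
  obtain ⟨b, hb, rfl⟩ := Term.exists_mk_eq_of_injective v
  obtain ⟨w, hw₁, hw₂⟩ := Types.exists_of_isPullback (hpre _ _ _ _ ((mono_iff_injective _).mpr hb)
    (IsPullback.of_isLimit (Types.pullbackLimitCone (↾a.x) (↾b.x)).isLimit)) _ _ h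
  have hfst : Function.Bijective fun p : Types.PullbackObj (↾a.x) (↾b.x) => p.1.1 :=
    ⟨fun p q hpq => Subtype.ext (Prod.ext hpq (hb (calc
      b.x p.1.2 = a.x p.1.1 := p.2.symm
      _ = a.x q.1.1 := congrArg a.x hpq
      _ = b.x q.1.2 := q.2))),
      a.t.2.surjective_of_map_eq hw₁⟩
  have hsnd : Function.Surjective fun p : Types.PullbackObj (↾a.x) (↾b.x) => p.1.2 :=
    b.t.2.surjective_of_map_eq hw₂
  let e := Equiv.ofBijective _ hfst
  refine Quot.sound ⟨⟨fun i => (e.symm i).1.2, hsnd.comp e.symm.surjective⟩,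
    funext fun i => ?_, Subtype.ext ?_⟩
  · conv_rhs => rw [← e.apply_symm_apply i]
    exact (e.symm i).2.symm
  · change G.map (↾fun i => (e.symm i).1.2) a.t.1 = b.t.1
    rw [← hw₁, ← hw₂, ← Functor.map_comp_apply]
    exact congrArg (fun f => G.map f w) (ConcreteCategory.hom_ext _ _ fun p =>
      congrArg (fun q => q.1.2) (e.symm_apply_apply p))

lemma fullySupportedEval_app_surjective (hfil : PreservesFilteredColimits G) (X : Type) :
    Function.Surjective ((fullySupportedEval hpre).app X) := fun u => by
  obtain ⟨k, x, t, ht, rfl⟩ := exists_isFullySupported_map_eq hfil u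
  exact ⟨Quot.mk _ ⟨k, x, ⟨t, ht⟩⟩, rfl⟩

lemma isIso_fullySupportedEval (hfil : PreservesFilteredColimits G) :
    IsIso (fullySupportedEval hpre) := by
  have (X : Type) : IsIso ((fullySupportedEval hpre).app X) := (isIso_iff_bijective _).mpr
    ⟨fullySupportedEval_app_injective hpre X, fullySupportedEval_app_surjective hpre hfil X⟩
  exact NatIso.isIso_of_isIso_app _

end Evaluation

/-- **Theorem (Essential image of `Lan_i` for `i : 𝕊 → Set`).**
The essential image of the left Kan extension functor `Lan_i : PSh 𝕊 ⥤ [Set, Set]`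
consists exactly of the finitary (filtered-colimit preserving), preimage-preserving
endofunctors of `Set`. -/
theorem essImage_lan_surjections (G : Type ⥤ Type) :
    (Functor.lan inclS : (SObj ⥤ Type) ⥤ (Type ⥤ Type)).essImage G ↔
      (PreservesFilteredColimits G ∧ PreservesPreimages G) := by
  constructor
  · rintro ⟨H, ⟨e⟩⟩
    let e' : lanModel H ≅ G := (lanModel.lanObjIso H).symm ≪≫ e
    have := lanModel_preservesFilteredColimits H
    exact ⟨⟨fun J _ _ => preservesColimitsOfShape_of_natIso e'⟩,
      PreservesPreimages.of_iso e' (lanModel_preservesPreimages H)⟩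
  · rintro ⟨hfil, hpre⟩
    have := isIso_fullySupportedEval hpre hfil
    exact ⟨_, ⟨lanModel.lanObjIso _ ≪≫ asIso (fullySupportedEval hpre)⟩⟩

end RelevantFunctors
end
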